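/- The functions y ↦ sinh(y/3)/(sinh(y)·exp(y/3)) and y ↦ cosh(2y/3)/(cosh(y)·exp(2y/3)) are antitone (non-increasing) on the interval (0,1], and hence for y ∈ (0,1] they are bounded below by sinh(1/3)/(sinh(1)·exp(1/3)) and cosh(2/3)/(cosh(1)·exp(2/3)) respectively. -/

import Mathlib

private lemma exp_cube (y : ℝ) : Real.exp y = (Real.exp (y/3))^3 := by
  rw [show y = y/3 + y/3 + y/3 by ring, Real.exp_add, Real.exp_add]; ring

private lemma f_eq {y : ℝ} (hy : 0 < y) :
    Real.sinh (y/3) / (Real.sinh y * Real.exp (y/3)) =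
      Real.exp (y/3) / ((Real.exp (y/3))^4 + (Real.exp (y/3))^2 + 1) := by
  have ht : (0:ℝ) < Real.exp (y/3) := Real.exp_pos _
  rw [Real.sinh_eq, Real.sinh_eq, Real.exp_neg, Real.exp_neg, exp_cube y]
  set t := Real.exp (y/3)
  have h1 : 1 < t := by
    calc (1:ℝ) = Real.exp 0 := Real.exp_zero.symm
      _ < t := Real.exp_lt_exp.mpr (by linarith)
  have h13 : (1:ℝ) < t^3 := by nlinarith [sq_nonneg (t-1), sq_nonneg t, mul_pos ht ht]
  have hinv : (t^3)⁻¹ < 1 := by rw [inv_lt_one_iff₀]; right; exact h13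
  have hgt : (0:ℝ) < t^3 - (t^3)⁻¹ := by linarith
  have hB : (t^3 - (t^3)⁻¹)/2 * t ≠ 0 := by positivity
  have hD : t^4 + t^2 + 1 ≠ 0 := by positivity
  rw [div_eq_div_iff hB hD]
  field_simp
  ring

private lemma g_eq (y : ℝ) :
    Real.cosh (2*y/3) / (Real.cosh y * Real.exp (2*y/3)) =
      ((Real.exp (y/3))^4 + 1) / ((Real.exp (y/3))^7 + Real.exp (y/3)) := by
  have ht : (0:ℝ) < Real.exp (y/3) := Real.exp_pos _
  have h2 : Real.exp (2*y/3) = (Real.exp (y/3))^2 := by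
    rw [show 2*y/3 = y/3 + y/3 by ring, Real.exp_add]; ring
  rw [Real.cosh_eq, Real.cosh_eq, Real.exp_neg, Real.exp_neg, exp_cube y, h2]
  set t := Real.exp (y/3)
  have hpos : (0:ℝ) < t^7 + t := by positivity
  field_simp

private lemma mem_facts {y : ℝ} (hy : y ∈ Set.Ioc (0:ℝ) 1) : 1 < Real.exp (y/3) := by
  have := hy.1
  calc (1:ℝ) = Real.exp 0 := Real.exp_zero.symm
    _ < Real.exp (y/3) := Real.exp_lt_exp.mpr (by linarith)

private lemma anti1 : AntitoneOn (fun y : ℝ =>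
    Real.sinh (y/3) / (Real.sinh y * Real.exp (y/3))) (Set.Ioc 0 1) := by
  intro a ha b hb hab
  simp only [f_eq ha.1, f_eq hb.1]
  set s := Real.exp (a/3)
  set t := Real.exp (b/3)
  have hs : 1 < s := mem_facts ha
  have ht : 1 < t := mem_facts hb
  have hst : s ≤ t := Real.exp_le_exp.mpr (by linarith)
  have hps : (0:ℝ) < s^4 + s^2 + 1 := by positivity
  have hpt : (0:ℝ) < t^4 + t^2 + 1 := by positivity
  rw [div_le_div_iff₀ hpt hps]
  have key : s*(t^4+t^2+1) - t*(s^4+s^2+1) =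
      (t-s)*(s*t*(t^2+t*s+s^2) + s*t - 1) := by ring
  have hst1 : (1:ℝ) < s*t := by nlinarith
  have h2 : (0:ℝ) ≤ s*t*(t^2+t*s+s^2) + s*t - 1 := by
    nlinarith [mul_nonneg (by positivity : (0:ℝ) ≤ s*t) (by positivity : (0:ℝ) ≤ t^2+t*s+s^2)]
  nlinarith [mul_nonneg (sub_nonneg.2 hst) h2]

private lemma anti2 : AntitoneOn (fun y : ℝ =>
    Real.cosh (2*y/3) / (Real.cosh y * Real.exp (2*y/3))) (Set.Ioc 0 1) := by
  intro a ha b hb hab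
  simp only [g_eq]
  set s := Real.exp (a/3)
  set t := Real.exp (b/3)
  have hs : 1 < s := mem_facts ha
  have ht : 1 < t := mem_facts hb
  have hst : s ≤ t := Real.exp_le_exp.mpr (by linarith)
  have hps : (0:ℝ) < s^7 + s := by positivity
  have hpt : (0:ℝ) < t^7 + t := by positivity
  rw [div_le_div_iff₀ hpt hps]
  have h3 : s^3 ≤ t^3 := pow_le_pow_left₀ (by linarith) hst 3
  have h7 : s^7 ≤ t^7 := pow_le_pow_left₀ (by linarith) hst 7
  have hgt1 : (1:ℝ) < s*t := by nlinarith
  have hc : (1:ℝ) ≤ (s*t)^3 := one_le_pow₀ (le_of_lt hgt1)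
  have hst1 : (0:ℝ) ≤ s^4*t^4 - s*t := by nlinarith [mul_nonneg (by positivity : (0:ℝ) ≤ s*t) (by linarith : (0:ℝ) ≤ (s*t)^3 - 1)]
  have key : (s^4+1)*(t^7+t) - (t^4+1)*(s^7+s) =
      (t^3-s^3)*(s^4*t^4 - s*t) + (t^7-s^7) + (t-s) := by ring
  nlinarith [mul_nonneg (sub_nonneg.2 h3) hst1]

theorem antitone_shell_ratios :
    AntitoneOn (fun y : ℝ => Real.sinh (y/3) / (Real.sinh y * Real.exp (y/3))) (Set.Ioc 0 1) ∧
    AntitoneOn (fun y : ℝ => Real.cosh (2*y/3) / (Real.cosh y * Real.exp (2*y/3))) (Set.Ioc 0 1) ∧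
    (∀ y ∈ Set.Ioc (0:ℝ) 1,
      Real.sinh (1/3) / (Real.sinh 1 * Real.exp (1/3)) ≤
        Real.sinh (y/3) / (Real.sinh y * Real.exp (y/3)) ∧
      Real.cosh (2/3) / (Real.cosh 1 * Real.exp (2/3)) ≤
        Real.cosh (2*y/3) / (Real.cosh y * Real.exp (2*y/3))) := by
  refine ⟨anti1, anti2, fun y hy => ?_⟩
  have h1 : (1:ℝ) ∈ Set.Ioc (0:ℝ) 1 := by norm_num
  constructor
  · have := anti1 hy h1 hy.2
    simpa using this
  · have := anti2 hy h1 hy.2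
    norm_num at this
    exact this
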